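/- arXiv:2212.02374 — 3 statements merged into one kernel-verified Lean document; each statement's English description precedes it below -/
import Mathlib

section
/- Let G be a finite simple undirected connected non-bipartite graph, so that the random walk on G is ergodic with unique stationary distribution π. Let f be any initial probability distribution on the vertices (f(v) ≥ 0 for all v and Σ_v f(v) = 1), and let s be a positive integer. Define λ' = λ₂ if 1 − λ₂ ≥ λ_N − 1, and λ' = 2 − λ_N otherwise. Then ‖fᵀPˢ − π‖₂ ≤ e^{−sλ'} · (maxᵢ √dᵢ)/(minⱼ √dⱼ). -/
open Matrix Finset

lemma aux_const_of_adj {N : ℕ} {G : SimpleGraph (Fin N)} (hconn : G.Connected)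
    (y : Fin N → ℝ) (h : ∀ i j, G.Adj i j → y i = y j) : ∀ i j, y i = y j := by
  intro i j
  obtain ⟨w⟩ := hconn.preconnected i j
  induction w with
  | nil => rfl
  | cons hadj _ ih => exact (h _ _ hadj).trans ih

lemma aux_sum_sq {N : ℕ} (U : Matrix (Fin N) (Fin N) ℝ) (hU : Uᵀ * U = 1)
    (g : Fin N → ℝ) : ∑ j, (∑ k, g k * U j k)^2 = ∑ k, (g k)^2 := by
  have h : ∀ k l, ∑ j, U j k * U j l = if k = l then (1:ℝ) else 0 := by
    intro k l
    have := congrFun (congrFun hU k) l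
    simpa [Matrix.mul_apply, Matrix.transpose_apply, Matrix.one_apply] using this
  calc ∑ j, (∑ k, g k * U j k)^2
      = ∑ j, ∑ k, ∑ l, (g k * g l) * (U j k * U j l) := by
        refine Finset.sum_congr rfl fun j _ => ?_
        rw [sq, Finset.sum_mul_sum]
        exact Finset.sum_congr rfl fun k _ => Finset.sum_congr rfl fun l _ => by ring
    _ = ∑ k, ∑ l, (g k * g l) * (∑ j, U j k * U j l) := by
        rw [Finset.sum_comm]
        refine Finset.sum_congr rfl fun k _ => ?_
        rw [Finset.sum_comm]
        refine Finset.sum_congr rfl fun l _ => ?_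
        rw [Finset.mul_sum]
    _ = ∑ k, (g k)^2 := by
        refine Finset.sum_congr rfl fun k _ => ?_
        rw [Finset.sum_eq_single k]
        · rw [h k k]; simp [sq]
        · intro l _ hlk; rw [h k l, if_neg (Ne.symm hlk), mul_zero]
        · intro hk; exact absurd (Finset.mem_univ k) hk

lemma aux_quad {N : ℕ} (A : Matrix (Fin N) (Fin N) ℝ) (d sd : Fin N → ℝ)
    (hAsym : ∀ i j, A i j = A j i) (hdeg : ∀ i, ∑ j, A i j = d i)
    (hsd0 : ∀ i, sd i ≠ 0) (hsdsq : ∀ i, sd i ^ 2 = d i)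
    (L : Matrix (Fin N) (Fin N) ℝ)
    (hL : ∀ i j, L i j = (if i = j then (1:ℝ) else 0) - A i j / (sd i * sd j))
    (x : Fin N → ℝ) :
    ∑ i, x i * (∑ j, L i j * x j)
      = (1/2) * ∑ i, ∑ j, A i j * (x i / sd i - x j / sd j)^2 := by
  have hterm : ∀ i j, x i * (L i j * x j)
      = (if i = j then x i * x j else 0) - A i j * ((x i / sd i) * (x j / sd j)) := by
    intro i j
    rw [hL]
    have h1 := hsd0 i
    have h2 := hsd0 j
    split_ifs with h
    · field_simp
    · field_simp
      ring
  have hxsq : ∀ i, x i ^ 2 = ∑ j, A i j * ((x i / sd i) * (x i / sd i)) := by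
    intro i
    rw [← Finset.sum_mul, hdeg, ← hsdsq i]
    field_simp [hsd0 i]
  have hS2 : ∑ i, ∑ j, A i j * ((x j / sd j) * (x j / sd j))
      = ∑ i, ∑ j, A i j * ((x i / sd i) * (x i / sd i)) := by
    rw [Finset.sum_comm]
    exact Finset.sum_congr rfl fun i _ => Finset.sum_congr rfl fun j _ => by rw [hAsym i j]
  calc ∑ i, x i * (∑ j, L i j * x j)
      = ∑ i, ∑ j, ((if i = j then x i * x j else 0)
            - A i j * ((x i / sd i) * (x j / sd j))) := by
        refine Finset.sum_congr rfl fun i _ => ?_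
        rw [Finset.mul_sum]
        exact Finset.sum_congr rfl fun j _ => hterm i j
    _ = ∑ i, (x i ^ 2 - ∑ j, A i j * ((x i / sd i) * (x j / sd j))) := by
        refine Finset.sum_congr rfl fun i _ => ?_
        rw [Finset.sum_sub_distrib]
        congr 1
        simp [sq]
    _ = (1/2) * ∑ i, ∑ j, A i j * (x i / sd i - x j / sd j)^2 := by
        have expand : ∀ i j, A i j * (x i / sd i - x j / sd j)^2
            = A i j * ((x i / sd i) * (x i / sd i))
              + A i j * ((x j / sd j) * (x j / sd j))
              - 2 * (A i j * ((x i / sd i) * (x j / sd j))) := by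
          intro i j; ring
        simp only [expand, Finset.sum_sub_distrib, Finset.sum_add_distrib, ← Finset.mul_sum]
        rw [hS2]
        have h3 : ∑ i, x i ^ 2 = ∑ i, ∑ j, A i j * ((x i / sd i) * (x i / sd i)) :=
          Finset.sum_congr rfl fun i _ => hxsq i
        rw [h3]
        ring

lemma aux_ker {N : ℕ} (hN : 0 < N) (G : SimpleGraph (Fin N)) [DecidableRel G.Adj]
    (hconn : G.Connected)
    (d sd : Fin N → ℝ) (hdeg : ∀ i, ∑ j, (G.adjMatrix ℝ) i j = d i)
    (hsd0 : ∀ i, sd i ≠ 0) (hsdsq : ∀ i, sd i ^ 2 = d i)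
    (L : Matrix (Fin N) (Fin N) ℝ)
    (hL : ∀ i j, L i j = (if i = j then (1:ℝ) else 0)
        - (G.adjMatrix ℝ) i j / (sd i * sd j))
    (x : Fin N → ℝ) (hx : ∀ i, ∑ j, L i j * x j = 0) :
    ∃ c, ∀ i, x i = c * sd i := by
  have hAsym : ∀ i j, (G.adjMatrix ℝ) i j = (G.adjMatrix ℝ) j i := by
    intro i j; simp [SimpleGraph.adjMatrix_apply, G.adj_comm]
  have hq := aux_quad (G.adjMatrix ℝ) d sd hAsym hdeg hsd0 hsdsq L hL x
  have h0 : ∑ i, ∑ j, (G.adjMatrix ℝ) i j * (x i / sd i - x j / sd j)^2 = 0 := by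
    have : ∑ i, x i * (∑ j, L i j * x j) = 0 := by
      refine Finset.sum_eq_zero fun i _ => ?_
      rw [hx i, mul_zero]
    rw [this] at hq
    linarith
  have hnn : ∀ i j, (0:ℝ) ≤ (G.adjMatrix ℝ) i j * (x i / sd i - x j / sd j)^2 := by
    intro i j
    apply mul_nonneg
    · simp [SimpleGraph.adjMatrix_apply]
      split_ifs <;> norm_num
    · positivity
  have hterm0 : ∀ i j, (G.adjMatrix ℝ) i j * (x i / sd i - x j / sd j)^2 = 0 := by
    intro i j
    have houter := (Finset.sum_eq_zero_iff_of_nonneg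
      (fun i _ => Finset.sum_nonneg fun j _ => hnn i j)).1 h0 i (Finset.mem_univ i)
    exact (Finset.sum_eq_zero_iff_of_nonneg (fun j _ => hnn i j)).1 houter j (Finset.mem_univ j)
  have hadjeq : ∀ i j, G.Adj i j → x i / sd i = x j / sd j := by
    intro i j hadj
    have h := hterm0 i j
    rw [SimpleGraph.adjMatrix_apply, if_pos hadj, one_mul] at h
    have := pow_eq_zero_iff (n := 2) (by norm_num) |>.1 h
    linarith
  have hconst := aux_const_of_adj hconn (fun i => x i / sd i) hadjeq
  refine ⟨x ⟨0, hN⟩ / sd ⟨0, hN⟩, fun i => ?_⟩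
  have h := hconst ⟨0, hN⟩ i
  rw [h]
  exact (div_mul_cancel₀ _ (hsd0 i)).symm

set_option maxHeartbeats 1600000 in
/-- Lemma 1 (Chung): for a finite simple undirected connected non-bipartite graph,
the random walk converges to the stationary distribution `π(i) = dᵢ / vol(G)` at rate
`‖fᵀPˢ − π‖₂ ≤ e^{−sλ'} · (maxᵢ √dᵢ)/(minⱼ √dⱼ)`, where `λ' = λ₂` if
`1 − λ₂ ≥ λ_N − 1` and `λ' = 2 − λ_N` otherwise; `λ₁ ≤ … ≤ λ_N` are the eigenvalues of
the symmetrically normalized Laplacian `L_sym = I − D^{-1/2} A D^{-1/2}`. -/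
theorem stmt_0
    {N : ℕ} (hN : 1 < N)
    (G : SimpleGraph (Fin N)) [DecidableRel G.Adj]
    (hconn : G.Connected)
    (hnonbip : ¬ G.Colorable 2)
    -- degrees
    (d : Fin N → ℝ)
    (hd : ∀ i, d i = (G.degree i : ℝ))
    (hdpos : ∀ i, 0 < d i)
    -- random walk transition matrix P = D⁻¹A
    (P : Matrix (Fin N) (Fin N) ℝ)
    (hP : ∀ i j, P i j = (G.adjMatrix ℝ) i j / d i)
    -- stationary distribution π(i) = dᵢ / vol(G)
    (statDist : Fin N → ℝ)
    (hstat : ∀ i, statDist i = d i / ∑ j, d j)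
    -- symmetrically normalized Laplacian
    (Lsym : Matrix (Fin N) (Fin N) ℝ)
    (hL : ∀ i j, Lsym i j = (if i = j then (1 : ℝ) else 0)
        - (G.adjMatrix ℝ) i j / (Real.sqrt (d i) * Real.sqrt (d j)))
    -- λ₁ ≤ λ₂ ≤ … ≤ λ_N : eigenvalues of Lsym (orthogonal diagonalization)
    (lam : Fin N → ℝ) (hmono : Monotone lam)
    (U : Matrix (Fin N) (Fin N) ℝ) (hU : U * Uᵀ = 1)
    (hspec : Lsym = U * Matrix.diagonal lam * Uᵀ)
    -- maxᵢ √dᵢ and minⱼ √dⱼ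
    (dmax dmin : ℝ)
    (hdmax : IsGreatest (Set.range fun i => Real.sqrt (d i)) dmax)
    (hdmin : IsLeast (Set.range fun i => Real.sqrt (d i)) dmin)
    -- initial probability distribution
    (f : Fin N → ℝ) (hf0 : ∀ v, 0 ≤ f v) (hf1 : ∑ v, f v = 1)
    -- number of steps
    (s : ℕ) (hs : 0 < s)
    -- λ'
    (lam' : ℝ)
    (hlam' : lam' = if 1 - lam ⟨1, hN⟩ ≥ lam ⟨N - 1, by omega⟩ - 1
        then lam ⟨1, hN⟩ else 2 - lam ⟨N - 1, by omega⟩) :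
    Real.sqrt (∑ j, (Matrix.vecMul f (P ^ s) j - statDist j) ^ 2)
      ≤ Real.exp (-(s : ℝ) * lam') * (dmax / dmin) := by
  haveI : NeZero N := ⟨by omega⟩
  have hNN : N - 1 < N := by omega
  set sd : Fin N → ℝ := fun i => Real.sqrt (d i) with hsd_def
  have hsdpos : ∀ i, 0 < sd i := fun i => Real.sqrt_pos.2 (hdpos i)
  have hsd0 : ∀ i, sd i ≠ 0 := fun i => (hsdpos i).ne'
  have hsdsq : ∀ i, sd i ^ 2 = d i := fun i => Real.sq_sqrt (hdpos i).le
  set A : Matrix (Fin N) (Fin N) ℝ := G.adjMatrix ℝ with hA_def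
  have hL' : ∀ i j, Lsym i j = (if i = j then (1 : ℝ) else 0) - A i j / (sd i * sd j) := hL
  have hdeg : ∀ i, ∑ j, A i j = d i := by
    intro i
    rw [hd]
    simp [hA_def, SimpleGraph.adjMatrix_apply, SimpleGraph.degree,
      SimpleGraph.neighborFinset_eq_filter, Finset.sum_boole]
  have hAsym : ∀ i j, A i j = A j i := by
    intro i j; simp [hA_def, SimpleGraph.adjMatrix_apply, G.adj_comm]
  set vol : ℝ := ∑ j, d j with hvol_def
  have hvolpos : 0 < vol := Finset.sum_pos (fun i _ => hdpos i) ⟨0, Finset.mem_univ 0⟩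
  have hUtU : Uᵀ * U = 1 := mul_eq_one_comm.mp hU
  have horthc : ∀ k l, ∑ j, U j k * U j l = if k = l then (1:ℝ) else 0 := by
    intro k l
    have := congrFun (congrFun hUtU k) l
    simpa [Matrix.mul_apply, Matrix.transpose_apply, Matrix.one_apply] using this
  have horthr : ∀ i j, ∑ k, U i k * U j k = if i = j then (1:ℝ) else 0 := by
    intro i j
    have := congrFun (congrFun hU i) j
    simpa [Matrix.mul_apply, Matrix.transpose_apply, Matrix.one_apply] using this
  -- eigen relation : Lsym * U = U * diagonal lam
  have hLU : ∀ j k, ∑ l, Lsym j l * U l k = U j k * lam k := by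
    intro j k
    have hmat : Lsym * U = U * Matrix.diagonal lam := by
      rw [hspec, Matrix.mul_assoc, hUtU, Matrix.mul_one]
    have h := congrFun (congrFun hmat j) k
    rw [Matrix.mul_apply, Matrix.mul_diagonal] at h
    exact h
  -- positive semidefiniteness
  have hpsd : ∀ k, 0 ≤ lam k := by
    intro k
    have hq := aux_quad A d sd hAsym hdeg hsd0 hsdsq Lsym hL' (fun j => U j k)
    have hlhs : ∑ j, U j k * (∑ l, Lsym j l * U l k) = lam k := by
      have : ∀ j, U j k * (∑ l, Lsym j l * U l k) = lam k * (U j k * U j k) := by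
        intro j; rw [hLU]; ring
      rw [Finset.sum_congr rfl fun j _ => this j, ← Finset.mul_sum, horthc k k,
        if_pos rfl, mul_one]
    rw [hlhs] at hq
    rw [hq]
    apply mul_nonneg (by norm_num)
    apply Finset.sum_nonneg
    intro i _
    apply Finset.sum_nonneg
    intro j _
    apply mul_nonneg
    · simp [hA_def, SimpleGraph.adjMatrix_apply]
      split_ifs <;> norm_num
    · positivity
  -- Lsym annihilates sd
  have hLphi : ∀ i, ∑ j, Lsym i j * sd j = 0 := by
    intro i
    have hterm : ∀ j, Lsym i j * sd j = (if i = j then sd j else 0) - A i j / sd i := by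
      intro j
      rw [hL' i j]
      split_ifs with h
      all_goals field_simp [hsd0 i, hsd0 j]
      all_goals ring
    rw [Finset.sum_congr rfl fun j _ => hterm j, Finset.sum_sub_distrib]
    rw [Finset.sum_ite_eq univ i (fun j => sd j), if_pos (Finset.mem_univ i)]
    rw [← Finset.sum_div, hdeg, ← hsdsq i, sq, mul_div_assoc, div_self (hsd0 i),
      mul_one, sub_self]
  -- beta
  set β : Fin N → ℝ := fun k => ∑ i, sd i * U i k with hβ_def
  have hbeta_lam : ∀ k, lam k * β k = 0 := by
    intro k
    have hLsymm : ∀ i j, Lsym i j = Lsym j i := by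
      intro i j; rw [hL' i j, hL' j i, hAsym]
      by_cases h : i = j
      · subst h; ring
      · rw [if_neg h, if_neg (Ne.symm h)]; ring
    have h1 : ∑ i, sd i * (∑ l, Lsym i l * U l k) = lam k * β k := by
      have : ∀ i, sd i * (∑ l, Lsym i l * U l k) = lam k * (sd i * U i k) := by
        intro i; rw [hLU]; ring
      rw [Finset.sum_congr rfl fun i _ => this i, ← Finset.mul_sum]
    have h2 : ∑ i, sd i * (∑ l, Lsym i l * U l k) = 0 := by
      have swap : ∑ i, sd i * (∑ l, Lsym i l * U l k)
          = ∑ l, (∑ i, Lsym l i * sd i) * U l k := by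
        simp only [Finset.mul_sum, Finset.sum_mul]
        rw [Finset.sum_comm]
        refine Finset.sum_congr rfl fun l _ => Finset.sum_congr rfl fun i _ => ?_
        rw [hLsymm i l]; ring
      rw [swap]
      refine Finset.sum_eq_zero fun l _ => ?_
      rw [hLphi l, zero_mul]
    rw [← h1, h2]
  have hphi_expand : ∀ i, ∑ k, β k * U i k = sd i := by
    intro i
    calc ∑ k, β k * U i k = ∑ k, ∑ j, sd j * U j k * U i k := by
          refine Finset.sum_congr rfl fun k _ => ?_
          rw [hβ_def]; rw [Finset.sum_mul]
      _ = ∑ j, sd j * ∑ k, U i k * U j k := by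
          rw [Finset.sum_comm]
          refine Finset.sum_congr rfl fun j _ => ?_
          rw [Finset.mul_sum]
          exact Finset.sum_congr rfl fun k _ => by ring
      _ = sd i := by
          rw [Finset.sum_congr rfl fun j _ => by rw [horthr i j]]
          simp
  -- lam 0 = 0
  have hlam0 : lam 0 = 0 := by
    have hex : ∃ k, β k ≠ 0 := by
      by_contra h
      push_neg at h
      have := hphi_expand 0
      rw [Finset.sum_congr rfl fun k _ => by rw [h k, zero_mul]] at this
      rw [Finset.sum_const_zero] at this
      exact (hsdpos 0).ne this
    obtain ⟨k, hk⟩ := hex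
    have hlamk : lam k = 0 := by
      rcases mul_eq_zero.1 (hbeta_lam k) with h | h
      · exact h
      · exact absurd h hk
    have h1 : lam 0 ≤ lam k := hmono (by simp [Fin.le_def])
    have h2 : 0 ≤ lam 0 := hpsd 0
    linarith [hlamk ▸ h1]
  -- column 0 is proportional to sdise
  have hker0 : ∃ c, ∀ i, U i 0 = c * sd i := by
    apply aux_ker (by omega) G hconn d sd hdeg hsd0 hsdsq Lsym hL'
    intro i
    rw [hLU, hlam0, mul_zero]
  obtain ⟨c0, hc0⟩ := hker0
  have hc0sq : c0 ^ 2 * vol = 1 := by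
    have := horthc 0 0
    rw [if_pos rfl] at this
    rw [Finset.sum_congr rfl fun j _ => by rw [hc0 j]] at this
    calc c0 ^ 2 * vol = ∑ j, c0 * sd j * (c0 * sd j) := by
          rw [hvol_def, Finset.mul_sum]
          exact Finset.sum_congr rfl fun j _ => by rw [← hsdsq j]; ring
      _ = 1 := this
  have hc0ne : c0 ≠ 0 := by
    intro h
    rw [h] at hc0sq
    simp at hc0sq
  -- uniqueness: lam k ≠ 0 for k ≠ 0
  have huniq : ∀ k, k ≠ 0 → lam k ≠ 0 := by
    intro k hk hlamk
    have hkerk : ∃ c, ∀ i, U i k = c * sd i := by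
      apply aux_ker (by omega) G hconn d sd hdeg hsd0 hsdsq Lsym hL'
      intro i
      rw [hLU, hlamk, mul_zero]
    obtain ⟨c, hc⟩ := hkerk
    have hcsq : c ^ 2 * vol = 1 := by
      have := horthc k k
      rw [if_pos rfl] at this
      rw [Finset.sum_congr rfl fun j _ => by rw [hc j]] at this
      calc c ^ 2 * vol = ∑ j, c * sd j * (c * sd j) := by
            rw [hvol_def, Finset.mul_sum]
            exact Finset.sum_congr rfl fun j _ => by rw [← hsdsq j]; ring
        _ = 1 := this
    have hortho : c0 * c * vol = 0 := by
      have := horthc 0 k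
      rw [if_neg (Ne.symm hk)] at this
      rw [Finset.sum_congr rfl fun j _ => by rw [hc0 j, hc j]] at this
      calc c0 * c * vol = ∑ j, c0 * sd j * (c * sd j) := by
            rw [hvol_def, Finset.mul_sum]
            exact Finset.sum_congr rfl fun j _ => by rw [← hsdsq j]; ring
        _ = 0 := this
    have hcne : c ≠ 0 := by
      intro h
      rw [h] at hcsq
      simp at hcsq
    rcases mul_eq_zero.1 hortho with h | h
    · rcases mul_eq_zero.1 h with h' | h'
      · exact hc0ne h'
      · exact hcne h'
    · exact hvolpos.ne' h
  have hbeta0 : ∀ k, k ≠ 0 → β k = 0 := by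
    intro k hk
    rcases mul_eq_zero.1 (hbeta_lam k) with h | h
    · exact absurd h (huniq k hk)
    · exact h
  -- matrix factorization of P^s
  have hdmat_inv : Matrix.diagonal sd * Matrix.diagonal (fun i => (sd i)⁻¹)
      = (1 : Matrix (Fin N) (Fin N) ℝ) := by
    rw [Matrix.diagonal_mul_diagonal]
    have : (fun i => sd i * (sd i)⁻¹) = fun _ : Fin N => (1:ℝ) :=
      funext fun i => mul_inv_cancel₀ (hsd0 i)
    rw [this, Matrix.diagonal_one]
  have hdinv_mat : Matrix.diagonal (fun i => (sd i)⁻¹) * Matrix.diagonal sd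
      = (1 : Matrix (Fin N) (Fin N) ℝ) := by
    rw [Matrix.diagonal_mul_diagonal]
    have : (fun i => (sd i)⁻¹ * sd i) = fun _ : Fin N => (1:ℝ) :=
      funext fun i => inv_mul_cancel₀ (hsd0 i)
    rw [this, Matrix.diagonal_one]
  have hMfact : (1 : Matrix (Fin N) (Fin N) ℝ) - Lsym
      = U * Matrix.diagonal (fun k => 1 - lam k) * Uᵀ := by
    have hdiag : Matrix.diagonal (fun k => 1 - lam k)
        = (1 : Matrix (Fin N) (Fin N) ℝ) - Matrix.diagonal lam := by
      rw [← Matrix.diagonal_one, Matrix.diagonal_sub]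
    rw [hdiag, Matrix.mul_sub, Matrix.mul_one, Matrix.sub_mul, hU, hspec]
  have hX : ∀ n : ℕ, ((1 : Matrix (Fin N) (Fin N) ℝ) - Lsym) ^ n
      = U * Matrix.diagonal (fun k => (1 - lam k) ^ n) * Uᵀ := by
    intro n
    induction n with
    | zero =>
      simp only [pow_zero, Matrix.diagonal_one, Matrix.mul_one]
      exact hU.symm
    | succ n ih =>
      rw [pow_succ, ih, hMfact]
      simp only [← Matrix.mul_assoc]
      rw [Matrix.mul_assoc (U * Matrix.diagonal fun k => (1 - lam k) ^ n) Uᵀ U, hUtU,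
        Matrix.mul_one]
      rw [Matrix.mul_assoc U (Matrix.diagonal fun k => (1 - lam k) ^ n),
        Matrix.diagonal_mul_diagonal]
      have hfun : (fun k => (1 - lam k) ^ n * (1 - lam k))
          = fun k => (1 - lam k) ^ (n + 1) := funext fun k => (pow_succ _ _).symm
      rw [hfun]
  have hPfact : P = Matrix.diagonal (fun i => (sd i)⁻¹)
      * ((1 : Matrix (Fin N) (Fin N) ℝ) - Lsym) * Matrix.diagonal sd := by
    ext i j
    rw [Matrix.mul_diagonal, Matrix.diagonal_mul, Matrix.sub_apply, Matrix.one_apply,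
      hL' i j, hP i j]
    rw [← hsdsq i]
    field_simp [hsd0 i, hsd0 j]
    ring
  have hPpow : ∀ n : ℕ, P ^ n = Matrix.diagonal (fun i => (sd i)⁻¹)
      * (((1 : Matrix (Fin N) (Fin N) ℝ) - Lsym) ^ n) * Matrix.diagonal sd := by
    intro n
    induction n with
    | zero => rw [pow_zero, pow_zero, Matrix.mul_one, hdinv_mat]
    | succ n ih =>
      rw [pow_succ, pow_succ, ih, hPfact]
      simp only [Matrix.mul_assoc]
      rw [← Matrix.mul_assoc (Matrix.diagonal sd) (Matrix.diagonal fun i => (sd i)⁻¹),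
        hdmat_inv, Matrix.one_mul]
  have hentry : ∀ i j, (P ^ s) i j
      = (sd i)⁻¹ * (∑ k, U i k * ((1 - lam k) ^ s * U j k)) * sd j := by
    intro i j
    rw [hPpow s, hX s, Matrix.mul_diagonal, Matrix.diagonal_mul]
    congr 1
    congr 1
    rw [Matrix.mul_apply]
    refine Finset.sum_congr rfl fun k _ => ?_
    rw [Matrix.mul_diagonal, Matrix.transpose_apply]
    ring
  -- the vecMul expansion
  set b : Fin N → ℝ := fun k => ∑ i, f i * (sd i)⁻¹ * U i k with hb_def
  have hvm : ∀ j, Matrix.vecMul f (P ^ s) j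
      = (∑ k, b k * (1 - lam k) ^ s * U j k) * sd j := by
    intro j
    have h1 : Matrix.vecMul f (P ^ s) j = ∑ i, f i * (P ^ s) i j := by
      simp [Matrix.vecMul, dotProduct]
    rw [h1]
    calc ∑ i, f i * (P ^ s) i j
        = ∑ i, ∑ k, (f i * (sd i)⁻¹ * U i k) * ((1 - lam k) ^ s * U j k * sd j) := by
          refine Finset.sum_congr rfl fun i _ => ?_
          rw [hentry i j, Finset.mul_sum, Finset.sum_mul, Finset.mul_sum]
          refine Finset.sum_congr rfl fun k _ => ?_
          ring
      _ = ∑ k, ∑ i, (f i * (sd i)⁻¹ * U i k) * ((1 - lam k) ^ s * U j k * sd j) :=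
          Finset.sum_comm
      _ = (∑ k, b k * (1 - lam k) ^ s * U j k) * sd j := by
          rw [Finset.sum_mul]
          refine Finset.sum_congr rfl fun k _ => ?_
          rw [← Finset.sum_mul, hb_def]
          ring
  have hsd_expand : ∀ j, statDist j = (∑ k, (β k / vol) * U j k) * sd j := by
    intro j
    rw [hstat]
    have h1 : ∑ k, (β k / vol) * U j k = sd j / vol := by
      calc ∑ k, (β k / vol) * U j k = (∑ k, β k * U j k) / vol := by
            rw [Finset.sum_div]
            exact Finset.sum_congr rfl fun k _ => by ring
        _ = sd j / vol := by rw [hphi_expand j]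
    rw [h1, div_mul_eq_mul_div, ← sq, hsdsq j]
  set g : Fin N → ℝ := fun k => b k * (1 - lam k) ^ s - β k / vol with hg_def
  have hdiff : ∀ j, Matrix.vecMul f (P ^ s) j - statDist j
      = (∑ k, g k * U j k) * sd j := by
    intro j
    rw [hvm j, hsd_expand j, ← sub_mul, ← Finset.sum_sub_distrib]
    congr 1
    exact Finset.sum_congr rfl fun k _ => by rw [hg_def]; ring
  -- g 0 = 0
  have hb0 : b 0 = c0 := by
    rw [hb_def]
    calc ∑ i, f i * (sd i)⁻¹ * U i 0 = ∑ i, c0 * f i := by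
          refine Finset.sum_congr rfl fun i _ => ?_
          rw [hc0 i]
          field_simp [hsd0 i]
      _ = c0 := by rw [← Finset.mul_sum, hf1, mul_one]
  have hβ0 : β 0 = c0 * vol := by
    rw [hβ_def, hvol_def, Finset.mul_sum]
    refine Finset.sum_congr rfl fun i _ => ?_
    rw [hc0 i, ← hsdsq i]
    ring
  have hg0 : g 0 = 0 := by
    rw [hg_def]
    simp only
    rw [hb0, hβ0, hlam0, sub_zero, one_pow, mul_one, mul_div_assoc,
      div_self hvolpos.ne', mul_one, sub_self]
  -- spectral gap bounds
  have hlam'2 : lam' = if 1 - lam ⟨1, hN⟩ ≥ lam ⟨N - 1, hNN⟩ - 1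
      then lam ⟨1, hN⟩ else 2 - lam ⟨N - 1, hNN⟩ := hlam'
  have hmono12 : lam ⟨1, hN⟩ ≤ lam ⟨N - 1, hNN⟩ := by
    apply hmono
    rw [Fin.le_def]
    simp
    omega
  have hr0 : 0 ≤ 1 - lam' := by
    rw [hlam'2]
    split_ifs with hc <;> linarith
  have habs : ∀ k : Fin N, k ≠ 0 → |1 - lam k| ≤ 1 - lam' := by
    intro k hk
    have hkv : k.val ≠ 0 := by intro h; exact hk (Fin.ext (by rw [h]; simp))
    have hk1 : lam ⟨1, hN⟩ ≤ lam k := by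
      apply hmono
      rw [Fin.le_def]
      simpa using by omega
    have hk2 : lam k ≤ lam ⟨N - 1, hNN⟩ := by
      apply hmono
      rw [Fin.le_def]
      have := k.isLt
      simpa using by omega
    rw [hlam'2, abs_le]
    split_ifs with hc <;> constructor <;> linarith
  -- summing up
  have hsum_g : ∑ k, (g k) ^ 2 ≤ ((1 - lam') ^ s) ^ 2 * ∑ k, (b k) ^ 2 := by
    rw [Finset.mul_sum]
    apply Finset.sum_le_sum
    intro k _
    by_cases hk : k = 0
    · rw [hk, hg0]
      have h00 : ((0:ℝ)) ^ 2 = 0 := by norm_num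
      rw [h00]
      positivity
    · have hgk : g k = b k * (1 - lam k) ^ s := by
        rw [hg_def]
        simp only
        rw [hbeta0 k hk, zero_div, sub_zero]
      have h1 : ((1 - lam k) ^ s) ^ 2 ≤ ((1 - lam') ^ s) ^ 2 := by
        have h2 : |1 - lam k| ^ s ≤ (1 - lam') ^ s :=
          pow_le_pow_left₀ (abs_nonneg _) (habs k hk) s
        calc ((1 - lam k) ^ s) ^ 2 = (|1 - lam k| ^ s) ^ 2 := by
              rw [← abs_pow, sq_abs]
          _ ≤ ((1 - lam') ^ s) ^ 2 :=
              pow_le_pow_left₀ (pow_nonneg (abs_nonneg _) s) h2 2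
      calc (g k) ^ 2 = ((1 - lam k) ^ s) ^ 2 * (b k) ^ 2 := by rw [hgk]; ring
        _ ≤ ((1 - lam') ^ s) ^ 2 * (b k) ^ 2 :=
            mul_le_mul_of_nonneg_right h1 (sq_nonneg _)
  have hsum_b : ∑ k, (b k) ^ 2 = ∑ i, (f i * (sd i)⁻¹) ^ 2 := by
    have hUT : (Uᵀ)ᵀ * Uᵀ = 1 := by rw [Matrix.transpose_transpose]; exact hU
    have h := aux_sum_sq Uᵀ hUT (fun i => f i * (sd i)⁻¹)
    simpa [Matrix.transpose_apply, hb_def] using h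
  have hdminpos : 0 < dmin := by
    obtain ⟨i0, hi0⟩ := hdmin.1
    rw [← hi0]
    exact hsdpos i0
  have hdmax0 : 0 ≤ dmax := by
    obtain ⟨i0, hi0⟩ := hdmax.1
    rw [← hi0]
    exact (hsdpos i0).le
  have hsum_y : ∑ i, (f i * (sd i)⁻¹) ^ 2 ≤ (dmin⁻¹) ^ 2 := by
    have hle : ∀ i, (f i * (sd i)⁻¹) ^ 2 ≤ f i * (dmin⁻¹) ^ 2 := by
      intro i
      have h1 : dmin ≤ sd i := hdmin.2 ⟨i, rfl⟩
      have h2 : (sd i)⁻¹ ≤ dmin⁻¹ := by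
        apply inv_anti₀ hdminpos h1
      have h3 : (0:ℝ) ≤ (sd i)⁻¹ := inv_nonneg.2 (hsdpos i).le
      have hfle : f i ≤ 1 := by
        rw [← hf1]
        exact Finset.single_le_sum (fun j _ => hf0 j) (Finset.mem_univ i)
      have h4 : ((sd i)⁻¹) ^ 2 ≤ (dmin⁻¹) ^ 2 := pow_le_pow_left₀ h3 h2 2
      have h5 : f i ^ 2 ≤ f i := by
        have h6 := mul_le_mul_of_nonneg_left hfle (hf0 i)
        rw [mul_one] at h6
        rw [sq]
        exact h6
      calc (f i * (sd i)⁻¹) ^ 2 = f i ^ 2 * ((sd i)⁻¹) ^ 2 := by ring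
        _ ≤ f i * (dmin⁻¹) ^ 2 := mul_le_mul h5 h4 (sq_nonneg _) (hf0 i)
    calc ∑ i, (f i * (sd i)⁻¹) ^ 2 ≤ ∑ i, f i * (dmin⁻¹) ^ 2 :=
          Finset.sum_le_sum fun i _ => hle i
      _ = (dmin⁻¹) ^ 2 := by rw [← Finset.sum_mul, hf1, one_mul]
  have hsum_total : ∑ j, (Matrix.vecMul f (P ^ s) j - statDist j) ^ 2
      ≤ (dmax * (1 - lam') ^ s * dmin⁻¹) ^ 2 := by
    calc ∑ j, (Matrix.vecMul f (P ^ s) j - statDist j) ^ 2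
        = ∑ j, (∑ k, g k * U j k) ^ 2 * (sd j) ^ 2 := by
          refine Finset.sum_congr rfl fun j _ => ?_
          rw [hdiff j]
          ring
      _ ≤ ∑ j, (∑ k, g k * U j k) ^ 2 * dmax ^ 2 := by
          apply Finset.sum_le_sum
          intro j _
          apply mul_le_mul_of_nonneg_left _ (sq_nonneg _)
          exact pow_le_pow_left₀ (hsdpos j).le (hdmax.2 ⟨j, rfl⟩) 2
      _ = dmax ^ 2 * ∑ j, (∑ k, g k * U j k) ^ 2 := by
          rw [Finset.mul_sum]
          exact Finset.sum_congr rfl fun j _ => by ring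
      _ = dmax ^ 2 * ∑ k, (g k) ^ 2 := by rw [aux_sum_sq U hUtU g]
      _ ≤ dmax ^ 2 * (((1 - lam') ^ s) ^ 2 * ∑ k, (b k) ^ 2) :=
          mul_le_mul_of_nonneg_left hsum_g (sq_nonneg _)
      _ ≤ dmax ^ 2 * (((1 - lam') ^ s) ^ 2 * (dmin⁻¹) ^ 2) := by
          apply mul_le_mul_of_nonneg_left _ (sq_nonneg _)
          apply mul_le_mul_of_nonneg_left _ (sq_nonneg _)
          rw [hsum_b]
          exact hsum_y
      _ = (dmax * (1 - lam') ^ s * dmin⁻¹) ^ 2 := by ring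
  have hfinal0 : Real.sqrt (∑ j, (Matrix.vecMul f (P ^ s) j - statDist j) ^ 2)
      ≤ dmax * (1 - lam') ^ s * dmin⁻¹ := by
    have hnn : 0 ≤ dmax * (1 - lam') ^ s * dmin⁻¹ := by
      apply mul_nonneg (mul_nonneg hdmax0 (pow_nonneg hr0 s)) (inv_nonneg.2 hdminpos.le)
    exact (Real.sqrt_le_sqrt hsum_total).trans (le_of_eq (Real.sqrt_sq hnn))
  have hpow : (1 - lam') ^ s ≤ Real.exp (-(s : ℝ) * lam') := by
    have h1 : 1 - lam' ≤ Real.exp (-lam') := by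
      linarith [Real.add_one_le_exp (-lam')]
    calc (1 - lam') ^ s ≤ (Real.exp (-lam')) ^ s := pow_le_pow_left₀ hr0 h1 s
      _ = Real.exp (-(s : ℝ) * lam') := by
        rw [← Real.exp_nat_mul]
        ring_nf
  calc Real.sqrt (∑ j, (Matrix.vecMul f (P ^ s) j - statDist j) ^ 2)
      ≤ dmax * (1 - lam') ^ s * dmin⁻¹ := hfinal0
    _ ≤ dmax * Real.exp (-(s : ℝ) * lam') * dmin⁻¹ := by
        apply mul_le_mul_of_nonneg_right _ (inv_nonneg.2 hdminpos.le)
        exact mul_le_mul_of_nonneg_left hpow hdmax0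
    _ = Real.exp (-(s : ℝ) * lam') * (dmax / dmin) := by
        rw [div_eq_mul_inv]
        ring
end

section
/- Let G be a finite simple undirected connected graph and let κ(i,j) denote the Lin–Lu–Yau Ricci curvature of the edge (i,j). If there exists κ > 0 such that κ(i,j) ≥ κ for every edge (i,j) ∈ E, then the spectral gap of the normalized Laplacian satisfies λ₂ ≥ κ. -/
open Matrix Finset

/-- L¹ Wasserstein distance between two distributions on the vertices of `G`, with
respect to the shortest-path distance: infimum over couplings `ξ` (nonnegative
functions whose row marginals equal `μ` and column marginals equal `ν`) of
`Σ_{u,v} d_G(u,v)·ξ(u,v)`. -/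
noncomputable def W1dist {N : ℕ} (G : SimpleGraph (Fin N)) (μ ν : Fin N → ℝ) : ℝ :=
  sInf { c : ℝ | ∃ ξ : Fin N → Fin N → ℝ,
    (∀ u v, 0 ≤ ξ u v) ∧ (∀ u, ∑ v, ξ u v = μ u) ∧ (∀ v, ∑ u, ξ u v = ν v) ∧
    c = ∑ u, ∑ v, (G.dist u v : ℝ) * ξ u v }

/-- The α-lazy measure `m_x^α`: mass `α` at `x` and mass `(1−α)/d_x` at each neighbor
of `x`. -/
noncomputable def lazyMeasure {N : ℕ} (G : SimpleGraph (Fin N)) [DecidableRel G.Adj]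
    (α : ℝ) (x : Fin N) : Fin N → ℝ :=
  fun v => if v = x then α else if G.Adj x v then (1 - α) / (G.degree x : ℝ) else 0

lemma lazy_weighted {N : ℕ} (G : SimpleGraph (Fin N)) [DecidableRel G.Adj]
    (α : ℝ) (x : Fin N) (f : Fin N → ℝ) :
    ∑ v, lazyMeasure G α x v * f v
      = α * f x + (1 - α) / (G.degree x : ℝ) * ∑ v ∈ G.neighborFinset x, f v := by
  have key : ∀ v, lazyMeasure G α x v * f v
      = (if v = x then α * f x else 0)
        + (if v ∈ G.neighborFinset x then (1 - α) / (G.degree x : ℝ) * f v else 0) := by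
    intro v
    simp only [lazyMeasure, SimpleGraph.mem_neighborFinset]
    by_cases hv : v = x
    · subst hv; simp [G.irrefl]
    · by_cases ha : G.Adj x v <;> simp [hv, ha]
  rw [Finset.sum_congr rfl (fun v _ => key v), Finset.sum_add_distrib,
    Finset.sum_ite_eq' univ x, Finset.sum_ite_mem, Finset.univ_inter, Finset.mul_sum]
  simp

lemma lazy_sum {N : ℕ} (G : SimpleGraph (Fin N)) [DecidableRel G.Adj]
    (α : ℝ) (x : Fin N) (hdeg : 0 < (G.degree x : ℝ)) :
    ∑ v, lazyMeasure G α x v = 1 := by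
  have := lazy_weighted G α x (fun _ => 1)
  simp only [mul_one] at this
  rw [this, Finset.sum_const, SimpleGraph.card_neighborFinset_eq_degree]
  field_simp
  simp only [nsmul_eq_mul, mul_one]
  ring

lemma lazy_nonneg {N : ℕ} (G : SimpleGraph (Fin N)) [DecidableRel G.Adj]
    {α : ℝ} (h0 : 0 ≤ α) (h1 : α ≤ 1) (x v : Fin N) : 0 ≤ lazyMeasure G α x v := by
  unfold lazyMeasure
  split_ifs
  · exact h0
  · exact div_nonneg (by linarith) (Nat.cast_nonneg _)
  · exact le_refl 0


lemma main_lemma {N : ℕ} (G : SimpleGraph (Fin N)) [DecidableRel G.Adj]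
    (hconn : G.Connected) (hdeg : ∀ i, 0 < (G.degree i : ℝ))
    (h : Fin N → ℝ) (μ : ℝ)
    (heig : ∀ i, ∑ j ∈ G.neighborFinset i, h j = (1 - μ) * (G.degree i : ℝ) * h i)
    (hnc : ∃ a b, h a ≠ h b) :
    ∃ x y, G.Adj x y ∧ ∀ α ∈ Set.Ioo (0:ℝ) 1,
      (1 - W1dist G (lazyMeasure G α x) (lazyMeasure G α y)) / (1 - α) ≤ μ := by
  classical
  -- the set of ordered adjacent pairs
  set S : Finset (Fin N × Fin N) := univ.filter (fun p => G.Adj p.1 p.2) with hSdef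
  obtain ⟨a0, b0, hab0⟩ := hnc
  have hS : S.Nonempty := by
    have h0 : 0 < G.degree a0 := by exact_mod_cast hdeg a0
    rw [← SimpleGraph.card_neighborFinset_eq_degree] at h0
    obtain ⟨b, hb⟩ := Finset.card_pos.mp h0
    rw [SimpleGraph.mem_neighborFinset] at hb
    exact ⟨(a0, b), by simp [hSdef, hb]⟩
  set M : ℝ := S.sup' hS (fun p => h p.1 - h p.2) with hMdef
  have hedge : ∀ u v, G.Adj u v → h u - h v ≤ M :=
    fun u v huv => Finset.le_sup' (f := fun p : Fin N × Fin N => h p.1 - h p.2)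
      (b := (u, v)) (by simp [hSdef, huv])
  have hwalk : ∀ (u v : Fin N) (p : G.Walk u v), h u - h v ≤ M * p.length := by
    intro u v p
    induction p with
    | nil => simp
    | cons adj p ih =>
      rename_i u' w' v'
      have h1 := hedge _ _ adj
      rw [SimpleGraph.Walk.length_cons]
      push_cast
      nlinarith
  have hMpos : 0 < M := by
    by_contra hM
    push_neg at hM
    have hconst : ∀ a b : Fin N, h a ≤ h b := by
      intro a b
      obtain ⟨p, _⟩ := hconn.exists_walk_length_eq_dist a b
      have := hwalk a b p
      nlinarith [Nat.cast_nonneg (α := ℝ) p.length]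
    exact hab0 (le_antisymm (hconst a0 b0) (hconst b0 a0))
  obtain ⟨⟨x, y⟩, hxyS, hxyM⟩ := Finset.exists_mem_eq_sup' hS (fun p => h p.1 - h p.2)
  have hadj : G.Adj x y := by simpa [hSdef] using hxyS
  have hlip : ∀ u v : Fin N, h u - h v ≤ M * (G.dist u v : ℝ) := by
    intro u v
    obtain ⟨p, hp⟩ := hconn.exists_walk_length_eq_dist u v
    simpa [hp] using hwalk u v p
  refine ⟨x, y, hadj, ?_⟩
  rintro α ⟨hα0, hα1⟩
  rw [div_le_iff₀ (by linarith : (0:ℝ) < 1 - α)]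
  -- suffices to show W1 ≥ 1 - μ*(1-α)
  have hW : 1 - μ * (1 - α) ≤ W1dist G (lazyMeasure G α x) (lazyMeasure G α y) := by
    have hint : ∀ z : Fin N, ∑ v, lazyMeasure G α z v * h v = (1 - (1-α)*μ) * h z := by
      intro z
      rw [lazy_weighted, heig z]
      have hdz := hdeg z
      field_simp
      ring
    apply le_csInf
    · refine ⟨∑ u, ∑ v, (G.dist u v : ℝ) * (lazyMeasure G α x u * lazyMeasure G α y v),
        fun u v => lazyMeasure G α x u * lazyMeasure G α y v, ?_, ?_, ?_, rfl⟩
      · exact fun u v => mul_nonneg (lazy_nonneg G hα0.le hα1.le _ _)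
          (lazy_nonneg G hα0.le hα1.le _ _)
      · intro u; rw [← Finset.mul_sum, lazy_sum G α y (hdeg y), mul_one]
      · intro v; rw [← Finset.sum_mul, lazy_sum G α x (hdeg x), one_mul]
    · rintro c ⟨ξ, hpos, hrow, hcol, rfl⟩
      have key : ∑ u, ∑ v, (h u - h v) * ξ u v ≤ M * ∑ u, ∑ v, (G.dist u v : ℝ) * ξ u v := by
        rw [Finset.mul_sum]
        refine Finset.sum_le_sum fun u _ => ?_
        rw [Finset.mul_sum]
        refine Finset.sum_le_sum fun v _ => ?_
        have := hlip u v
        nlinarith [hpos u v]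
      have e1 : ∀ u, ∑ v, (h u - h v) * ξ u v = h u * (∑ v, ξ u v) - ∑ v, h v * ξ u v := by
        intro u
        rw [Finset.mul_sum, ← Finset.sum_sub_distrib]
        exact Finset.sum_congr rfl fun v _ => by ring
      have expand : ∑ u, ∑ v, (h u - h v) * ξ u v
          = (1 - (1-α)*μ) * h x - (1 - (1-α)*μ) * h y := by
        rw [Finset.sum_congr rfl (fun u _ => e1 u), Finset.sum_sub_distrib, Finset.sum_comm]
        have lhs1 : ∑ u, h u * (∑ v, ξ u v) = (1 - (1-α)*μ) * h x := by
          rw [← hint x]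
          exact Finset.sum_congr rfl fun u _ => by rw [hrow u, mul_comm]
        have lhs2 : ∑ v, ∑ u, h v * ξ u v = (1 - (1-α)*μ) * h y := by
          rw [← hint y]
          exact Finset.sum_congr rfl fun v _ => by rw [← Finset.mul_sum, hcol v, mul_comm]
        rw [lhs1, lhs2]
      rw [expand] at key
      have hM' : M = h x - h y := hxyM
      have key2 : M * (1 - μ*(1-α)) ≤ M * (∑ u, ∑ v, (G.dist u v:ℝ) * ξ u v) := by
        calc M * (1 - μ*(1-α)) = (1 - (1-α)*μ) * h x - (1 - (1-α)*μ) * h y := by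
              rw [hM']; ring
          _ ≤ _ := key
      exact (mul_le_mul_iff_right₀ hMpos).mp key2
  linarith

lemma eig_entry {N : ℕ} (G : SimpleGraph (Fin N)) [DecidableRel G.Adj]
    (d : Fin N → ℝ) (hd : ∀ i, d i = (G.degree i : ℝ)) (hdpos : ∀ i, 0 < d i)
    (Lsym : Matrix (Fin N) (Fin N) ℝ)
    (hL : ∀ i j, Lsym i j = (if i = j then (1 : ℝ) else 0)
        - (G.adjMatrix ℝ) i j / (Real.sqrt (d i) * Real.sqrt (d j)))
    (lam : Fin N → ℝ) (U : Matrix (Fin N) (Fin N) ℝ)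
    (hLU : Lsym * U = U * Matrix.diagonal lam) (k : Fin N) (i : Fin N) :
    ∑ j ∈ G.neighborFinset i, (U j k / Real.sqrt (d j))
      = (1 - lam k) * (G.degree i : ℝ) * (U i k / Real.sqrt (d i)) := by
  classical
  have hsq : ∀ j, (0:ℝ) < Real.sqrt (d j) := fun j => Real.sqrt_pos.mpr (hdpos j)
  have e : ∑ j, Lsym i j * U j k = U i k * lam k := by
    have h' : (Lsym * U) i k = (U * Matrix.diagonal lam) i k := by rw [hLU]
    rw [Matrix.mul_diagonal] at h'
    simpa [Matrix.mul_apply] using h' 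
  have e2 : ∑ j, Lsym i j * U j k
      = U i k - (∑ j, (G.adjMatrix ℝ) i j * (U j k / Real.sqrt (d j))) / Real.sqrt (d i) := by
    have step : ∀ j, Lsym i j * U j k
        = (if i = j then U j k else 0)
          - (G.adjMatrix ℝ) i j * (U j k / Real.sqrt (d j)) / Real.sqrt (d i) := by
      intro j
      rw [hL i j]
      by_cases hij : i = j
      · subst hij; simp [SimpleGraph.adjMatrix_apply]
      · simp only [if_neg hij]; ring
    rw [Finset.sum_congr rfl (fun j _ => step j), Finset.sum_sub_distrib,
      Finset.sum_ite_eq univ i, ← Finset.sum_div]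
    simp
  have e3 : ∑ j, (G.adjMatrix ℝ) i j * (U j k / Real.sqrt (d j))
      = ∑ j ∈ G.neighborFinset i, U j k / Real.sqrt (d j) := by
    rw [SimpleGraph.neighborFinset_eq_filter, Finset.sum_filter]
    exact Finset.sum_congr rfl fun j _ => by by_cases hA : G.Adj i j <;> simp [hA]
  rw [e3] at e2
  set B := ∑ j ∈ G.neighborFinset i, U j k / Real.sqrt (d j) with hB
  have e4 : U i k - B / Real.sqrt (d i) = U i k * lam k := by rw [← e2, e]
  have hdi : Real.sqrt (d i) * Real.sqrt (d i) = d i := Real.mul_self_sqrt (hdpos i).le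
  have hne : Real.sqrt (d i) ≠ 0 := (hsq i).ne'
  rw [← hd i]
  field_simp at e4
  have e5 : B = (1 - lam k) * U i k * Real.sqrt (d i) := by linear_combination (-1 : ℝ) * e4
  rw [e5, ← hdi]
  field_simp
  ring_nf
  rw [Real.sqrt_sq (hsq i).le]

/-- Theorem 2 (Lin–Lu–Yau): if the Lin–Lu–Yau Ricci curvature
`κ(x,y) = lim_{α→1⁻} (1 − W₁(m_x^α, m_y^α))/(1−α)` satisfies `κ(i,j) ≥ κ > 0` on every
edge of a finite simple undirected connected graph, then the spectral gap of the
normalized Laplacian satisfies `λ₂ ≥ κ`. -/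
theorem stmt_4
    {N : ℕ} (hN : 1 < N)
    (G : SimpleGraph (Fin N)) [DecidableRel G.Adj]
    (hconn : G.Connected)
    -- degrees
    (d : Fin N → ℝ)
    (hd : ∀ i, d i = (G.degree i : ℝ))
    (hdpos : ∀ i, 0 < d i)
    -- symmetrically normalized Laplacian
    (Lsym : Matrix (Fin N) (Fin N) ℝ)
    (hL : ∀ i j, Lsym i j = (if i = j then (1 : ℝ) else 0)
        - (G.adjMatrix ℝ) i j / (Real.sqrt (d i) * Real.sqrt (d j)))
    -- λ₁ ≤ λ₂ ≤ … ≤ λ_N : eigenvalues of Lsym (orthogonal diagonalization)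
    (lam : Fin N → ℝ) (hmono : Monotone lam)
    (U : Matrix (Fin N) (Fin N) ℝ) (hU : U * Uᵀ = 1)
    (hspec : Lsym = U * Matrix.diagonal lam * Uᵀ)
    -- Lin–Lu–Yau Ricci curvature: the limit as α → 1⁻ of κ_α(x,y)/(1−α)
    (ricci : Fin N → Fin N → ℝ)
    (hricci : ∀ x y, G.Adj x y →
      Filter.Tendsto
        (fun α : ℝ =>
          (1 - W1dist G (lazyMeasure G α x) (lazyMeasure G α y)) / (1 - α))
        (nhdsWithin 1 (Set.Iio 1)) (nhds (ricci x y)))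
    -- positive lower bound on the curvature of every edge
    (κ : ℝ) (hκ : 0 < κ)
    (hbound : ∀ i j, G.Adj i j → κ ≤ ricci i j) :
    κ ≤ lam ⟨1, hN⟩ := by
  classical
  have hUtU : Uᵀ * U = 1 := mul_eq_one_comm.mp hU
  have hdeg : ∀ i, 0 < (G.degree i : ℝ) := fun i => hd i ▸ hdpos i
  have hLU : Lsym * U = U * Matrix.diagonal lam := by
    rw [hspec, Matrix.mul_assoc, hUtU, Matrix.mul_one]
  set k0 : Fin N := ⟨0, by omega⟩ with hk0
  set k1 : Fin N := ⟨1, hN⟩ with hk1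
  have heig := eig_entry G d hd hdpos Lsym hL lam U hLU
  -- conclusion helper
  have conclude : ∀ (μv : ℝ) (x y : Fin N), G.Adj x y →
      (∀ α ∈ Set.Ioo (0:ℝ) 1,
        (1 - W1dist G (lazyMeasure G α x) (lazyMeasure G α y)) / (1 - α) ≤ μv) →
      ricci x y ≤ μv := by
    intro μv x y hadj hb
    refine le_of_tendsto (hricci x y hadj) ?_
    filter_upwards [Ioo_mem_nhdsLT_of_mem (by norm_num : (1:ℝ) ∈ Set.Ioc 0 1)] with α hα
    exact hb α hα
  by_cases hc1 : ∃ a b, U a k1 / Real.sqrt (d a) ≠ U b k1 / Real.sqrt (d b)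
  · obtain ⟨x, y, hadj, hb⟩ := main_lemma G hconn hdeg
      (fun i => U i k1 / Real.sqrt (d i)) (lam k1) (heig k1) hc1
    exact le_trans (hbound x y hadj) (conclude _ x y hadj hb)
  · push_neg at hc1
    by_cases hc0 : ∃ a b, U a k0 / Real.sqrt (d a) ≠ U b k0 / Real.sqrt (d b)
    · obtain ⟨x, y, hadj, hb⟩ := main_lemma G hconn hdeg
        (fun i => U i k0 / Real.sqrt (d i)) (lam k0) (heig k0) hc0
      have h1 : κ ≤ lam k0 := le_trans (hbound x y hadj) (conclude _ x y hadj hb)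
      exact h1.trans (hmono (by simp [hk0, hk1, Fin.mk_le_mk]))
    · exfalso
      push_neg at hc0
      have hsq : ∀ j, (0:ℝ) < Real.sqrt (d j) := fun j => Real.sqrt_pos.mpr (hdpos j)
      set c0 : ℝ := U k0 k0 / Real.sqrt (d k0) with hc0def
      set c1 : ℝ := U k0 k1 / Real.sqrt (d k0) with hc1def
      have hU0 : ∀ i, U i k0 = c0 * Real.sqrt (d i) := by
        intro i
        rw [hc0def, ← hc0 i k0]
        exact (div_mul_cancel₀ _ (hsq i).ne').symm
      have hU1 : ∀ i, U i k1 = c1 * Real.sqrt (d i) := by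
        intro i
        rw [hc1def, ← hc1 i k0]
        exact (div_mul_cancel₀ _ (hsq i).ne').symm
      have hsum : ∀ a b : Fin N, ∑ i, U i a * U i b = (1 : Matrix (Fin N) (Fin N) ℝ) a b := by
        intro a b
        have := congrFun (congrFun hUtU a) b
        simpa [Matrix.mul_apply, Matrix.transpose_apply] using this
      have hdsum : ∀ i : Fin N, Real.sqrt (d i) * Real.sqrt (d i) = d i :=
        fun i => Real.mul_self_sqrt (hdpos i).le
      have hDpos : 0 < ∑ i, d i :=
        Finset.sum_pos (fun i _ => hdpos i) ⟨k0, Finset.mem_univ k0⟩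
      have hne01 : k0 ≠ k1 := by
        rw [hk0, hk1]
        intro hh
        exact absurd (congrArg Fin.val hh) (by norm_num)
      have horth : c0 * c1 * ∑ i, d i = 0 := by
        have h' := hsum k0 k1
        rw [Matrix.one_apply_ne hne01] at h'
        rw [← h', Finset.mul_sum]
        refine Finset.sum_congr rfl fun i _ => ?_
        rw [hU0 i, hU1 i]
        linear_combination (-(c0*c1)) * hdsum i
      have hn0 : c0 * c0 * ∑ i, d i = 1 := by
        have h' := hsum k0 k0
        rw [Matrix.one_apply_eq] at h'
        rw [← h', Finset.mul_sum]
        refine Finset.sum_congr rfl fun i _ => ?_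
        rw [hU0 i]
        linear_combination (-(c0*c0)) * hdsum i
      have hn1 : c1 * c1 * ∑ i, d i = 1 := by
        have h' := hsum k1 k1
        rw [Matrix.one_apply_eq] at h'
        rw [← h', Finset.mul_sum]
        refine Finset.sum_congr rfl fun i _ => ?_
        rw [hU1 i]
        linear_combination (-(c1*c1)) * hdsum i
      have h0ne : c0 ≠ 0 := by intro h; rw [h] at hn0; simp at hn0
      have h1ne : c1 ≠ 0 := by intro h; rw [h] at hn1; simp at hn1
      have : c0 * c1 ≠ 0 := mul_ne_zero h0ne h1ne
      exact this (by
        have := horth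
        rcases mul_eq_zero.mp this with h | h
        · exact h
        · exact absurd h hDpos.ne')
end

section
/- Let G be a finite simple undirected connected graph. For every edge (i,j) ∈ E, Ollivier's Ricci curvature satisfies κ(i,j) ≥ JLC(i,j), where JLC(i,j) = −( 1 − 1/dᵢ − 1/dⱼ − #(i,j)/min(dᵢ,dⱼ) )₊ − ( 1 − 1/dᵢ − 1/dⱼ − #(i,j)/max(dᵢ,dⱼ) )₊ + #(i,j)/max(dᵢ,dⱼ). -/
open Matrix Finset

/-- The measure `m_x`, uniform on the neighbors of `x`:
`m_x(v) = 1/d_x` if `v ∈ N(x)` and `0` otherwise. -/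
noncomputable def unifMeasure {N : ℕ} (G : SimpleGraph (Fin N)) [DecidableRel G.Adj]
    (x : Fin N) : Fin N → ℝ :=
  fun v => if G.Adj x v then 1 / (G.degree x : ℝ) else 0

lemma W1dist_le {N : ℕ} (G : SimpleGraph (Fin N)) (μ ν : Fin N → ℝ) (ξ : Fin N → Fin N → ℝ)
    (h0 : ∀ u v, 0 ≤ ξ u v) (h1 : ∀ u, ∑ v, ξ u v = μ u) (h2 : ∀ v, ∑ u, ξ u v = ν v)
    {B : ℝ} (hB : ∑ u, ∑ v, (G.dist u v : ℝ) * ξ u v ≤ B) :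
    W1dist G μ ν ≤ B := by
  refine le_trans (csInf_le ?_ ?_) hB
  · refine ⟨0, fun c hc => ?_⟩
    obtain ⟨ζ, hζ0, -, -, rfl⟩ := hc
    exact Finset.sum_nonneg fun u _ => Finset.sum_nonneg fun v _ =>
      mul_nonneg (Nat.cast_nonneg _) (hζ0 u v)
  · exact ⟨ξ, h0, h1, h2, rfl⟩

lemma sum_pt {N : ℕ} (x : Fin N) (a : ℝ) : (∑ v : Fin N, if v = x then a else 0) = a := by
  simp

lemma sum_mem_const {N : ℕ} (s : Finset (Fin N)) (a : ℝ) :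
    (∑ v : Fin N, if v ∈ s then a else 0) = (s.card : ℝ) * a := by
  rw [Finset.sum_ite_mem, Finset.univ_inter, Finset.sum_const, nsmul_eq_mul]

set_option maxHeartbeats 4000000 in
lemma jl_coupling {N : ℕ} (G : SimpleGraph (Fin N)) [DecidableRel G.Adj]
    (hconn : G.Connected) (x y : Fin N) (hxy : G.Adj x y)
    (hdeg : G.degree x ≤ G.degree y) :
    ∃ ξ : Fin N → Fin N → ℝ,
      (∀ u v, 0 ≤ ξ u v) ∧ (∀ u, ∑ v, ξ u v = unifMeasure G x u) ∧
      (∀ v, ∑ u, ξ u v = unifMeasure G y v) ∧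
      ∑ u, ∑ v, (G.dist u v : ℝ) * ξ u v ≤
        1 - ((G.neighborFinset x ∩ G.neighborFinset y).card : ℝ) / (G.degree y : ℝ)
        + max (1 - 1/(G.degree x : ℝ) - 1/(G.degree y : ℝ)
            - ((G.neighborFinset x ∩ G.neighborFinset y).card : ℝ)/(G.degree x : ℝ)) 0
        + max (1 - 1/(G.degree x : ℝ) - 1/(G.degree y : ℝ)
            - ((G.neighborFinset x ∩ G.neighborFinset y).card : ℝ)/(G.degree y : ℝ)) 0 := by
  classical
  set A : Finset (Fin N) := G.neighborFinset x ∩ G.neighborFinset y with hA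
  set Bx : Finset (Fin N) := G.neighborFinset x \ insert y A with hBx
  set By : Finset (Fin N) := G.neighborFinset y \ insert x A with hBy
  have memA : ∀ u, u ∈ A ↔ (G.Adj x u ∧ G.Adj y u) := by
    intro u; rw [hA]; simp [SimpleGraph.mem_neighborFinset]
  have memBx : ∀ u, u ∈ Bx ↔ (G.Adj x u ∧ ¬(u = y ∨ u ∈ A)) := by
    intro u; rw [hBx]; simp [SimpleGraph.mem_neighborFinset]
  have memBy : ∀ v, v ∈ By ↔ (G.Adj y v ∧ ¬(v = x ∨ v ∈ A)) := by
    intro v; rw [hBy]; simp [SimpleGraph.mem_neighborFinset]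
  have hyA : y ∉ A := fun h => G.loopless.irrefl y ((memA y).mp h).2
  have hxA : x ∉ A := fun h => G.loopless.irrefl x ((memA x).mp h).1
  have hyBx : y ∉ Bx := fun h => by have := (memBx y).mp h; tauto
  have hxBx : x ∉ Bx := fun h => G.loopless.irrefl x ((memBx x).mp h).1
  have hxBy : x ∉ By := fun h => by have := (memBy x).mp h; tauto
  have hyBy : y ∉ By := fun h => G.loopless.irrefl y ((memBy y).mp h).1
  have hABx : ∀ u, u ∈ A → u ∉ Bx := by intro u hu h; have := (memBx u).mp h; tauto
  have hABy : ∀ v, v ∈ A → v ∉ By := by intro v hv h; have := (memBy v).mp h; tauto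
  -- cardinalities
  have hsubx : insert y A ⊆ G.neighborFinset x := by
    intro u hu
    rcases Finset.mem_insert.mp hu with h | h
    · subst h; exact (SimpleGraph.mem_neighborFinset G x u).mpr hxy
    · exact (SimpleGraph.mem_neighborFinset G x u).mpr ((memA u).mp h).1
  have hsuby : insert x A ⊆ G.neighborFinset y := by
    intro u hu
    rcases Finset.mem_insert.mp hu with h | h
    · subst h; exact (SimpleGraph.mem_neighborFinset G y u).mpr hxy.symm
    · exact (SimpleGraph.mem_neighborFinset G y u).mpr ((memA u).mp h).2
  have hcardx : G.degree x = A.card + 1 + Bx.card := by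
    have h1 : (insert y A).card = A.card + 1 := Finset.card_insert_of_notMem hyA
    have h2 : Bx.card = G.degree x - (A.card + 1) := by
      rw [hBx, Finset.card_sdiff_of_subset hsubx, SimpleGraph.card_neighborFinset_eq_degree, h1]
    have h3 : A.card + 1 ≤ G.degree x := by
      rw [← SimpleGraph.card_neighborFinset_eq_degree, ← h1]
      exact Finset.card_le_card hsubx
    omega
  have hcardy : G.degree y = A.card + 1 + By.card := by
    have h1 : (insert x A).card = A.card + 1 := Finset.card_insert_of_notMem hxA
    have h2 : By.card = G.degree y - (A.card + 1) := by
      rw [hBy, Finset.card_sdiff_of_subset hsuby, SimpleGraph.card_neighborFinset_eq_degree, h1]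
    have h3 : A.card + 1 ≤ G.degree y := by
      rw [← SimpleGraph.card_neighborFinset_eq_degree, ← h1]
      exact Finset.card_le_card hsuby
    omega
  -- real quantities
  set dx : ℝ := (G.degree x : ℝ) with hdx
  set dy : ℝ := (G.degree y : ℝ) with hdy
  set k : ℝ := (A.card : ℝ) with hk
  set n3 : ℝ := (Bx.card : ℝ) with hn3
  set n4 : ℝ := (By.card : ℝ) with hn4
  clear_value dx dy k n3 n4
  have hdx0' : 0 < G.degree x := (G.degree_pos_iff_exists_adj x).mpr ⟨y, hxy⟩
  have hdy0' : 0 < G.degree y := (G.degree_pos_iff_exists_adj y).mpr ⟨x, hxy.symm⟩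
  have hdx0 : 0 < dx := by rw [hdx]; exact Nat.cast_pos.mpr hdx0'
  have hdy0 : 0 < dy := by rw [hdy]; exact Nat.cast_pos.mpr hdy0'
  have hdxy : dx ≤ dy := by rw [hdx, hdy]; exact_mod_cast hdeg
  have hk0 : 0 ≤ k := by rw [hk]; exact Nat.cast_nonneg _
  have hn30 : 0 ≤ n3 := by rw [hn3]; exact Nat.cast_nonneg _
  have hn40 : 0 ≤ n4 := by rw [hn4]; exact Nat.cast_nonneg _
  have hdxk : dx = k + 1 + n3 := by rw [hdx, hk, hn3]; exact_mod_cast hcardx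
  have hdyk : dy = k + 1 + n4 := by rw [hdy, hk, hn4]; exact_mod_cast hcardy
  have hinv : 1/dy ≤ 1/dx := one_div_le_one_div_of_le hdx0 hdxy
  set S1 : ℝ := 1/dx with hS1d
  set S2 : ℝ := k * (1/dx - 1/dy) with hS2d
  set S3 : ℝ := n3/dx with hS3d
  set D1 : ℝ := n4/dy with hD1d
  set D2 : ℝ := 1/dy with hD2d
  clear_value S1 S2 S3 D1 D2
  have hS1 : 0 ≤ S1 := by rw [hS1d]; exact div_nonneg zero_le_one (le_of_lt hdx0)
  have hS2 : 0 ≤ S2 := by rw [hS2d]; exact mul_nonneg hk0 (by linarith)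
  have hS3 : 0 ≤ S3 := by rw [hS3d]; exact div_nonneg hn30 (le_of_lt hdx0)
  have hD1 : 0 ≤ D1 := by rw [hD1d]; exact div_nonneg hn40 (le_of_lt hdy0)
  have hD2 : 0 ≤ D2 := by rw [hD2d]; exact div_nonneg zero_le_one (le_of_lt hdy0)
  have htotS : S1 + S2 + S3 = 1 - k/dy := by
    have h1 : (1 + k + n3) = dx := by linarith
    have : S1 + S2 + S3 = (1 + k + n3)/dx - k/dy := by
      rw [hS1d, hS2d, hS3d, hD2d]; ring
    rw [this, h1, div_self (ne_of_gt hdx0)]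
  have htotD : D1 + D2 = 1 - k/dy := by
    have h1 : (n4 + 1) = dy - k := by linarith
    have : D1 + D2 = (n4 + 1)/dy := by rw [hD1d, hD2d]; ring
    rw [this, h1, sub_div, div_self (ne_of_gt hdy0)]
  have htot : S1 + S2 + S3 = D1 + D2 := by rw [htotS, htotD]
  set m11 : ℝ := min S1 D1 with hm11d
  set m12 : ℝ := S1 - m11 with hm12d
  set m21 : ℝ := min (S1 + S2) D1 - m11 with hm21d
  set m22 : ℝ := S2 - m21 with hm22d
  set m31 : ℝ := D1 - min (S1 + S2) D1 with hm31d
  set m32 : ℝ := S3 - m31 with hm32d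
  clear_value m11 m12 m21 m22 m31 m32
  have hm11 : 0 ≤ m11 := hm11d ▸ le_min hS1 hD1
  have hm12 : 0 ≤ m12 := by rw [hm12d, hm11d]; simp [min_le_left]
  have hm21 : 0 ≤ m21 := by
    rw [hm21d, hm11d]; simp only [min_def]; split_ifs <;> linarith
  have hm22 : 0 ≤ m22 := by
    rw [hm22d, hm21d, hm11d]; simp only [min_def]; split_ifs <;> linarith
  have hm31 : 0 ≤ m31 := by rw [hm31d]; simp [min_le_right]
  have hm32 : 0 ≤ m32 := by
    rw [hm32d, hm31d]; simp only [min_def]; split_ifs <;> linarith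
  -- degenerate cases
  have hn4z : n4 = 0 → m11 = 0 ∧ m21 = 0 ∧ m31 = 0 := by
    intro h
    have hD : D1 = 0 := by rw [hD1d, h, zero_div]
    refine ⟨?_, ?_, ?_⟩
    · rw [hm11d, hD]; exact min_eq_right hS1
    · rw [hm21d, hm11d, hD, min_eq_right (by linarith), min_eq_right hS1]; ring
    · rw [hm31d, hD, min_eq_right (by linarith)]; ring
  have hkz : k = 0 → m21 = 0 ∧ m22 = 0 := by
    intro h
    have hS : S2 = 0 := by rw [hS2d, h, zero_mul]
    constructor
    · rw [hm21d, hm11d, hS, add_zero]; ring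
    · rw [hm22d, hm21d, hm11d, hS, add_zero]; ring
  have hn3z : n3 = 0 → m31 = 0 ∧ m32 = 0 := by
    intro h
    have hS : S3 = 0 := by rw [hS3d, h, zero_div]
    have h1 : m32 = -m31 := by rw [hm32d, hS]; ring
    constructor <;> linarith
  -- telescoping identities
  have hrow1 : m11 + m12 = S1 := by rw [hm12d]; ring
  have hrow2 : m21 + m22 = S2 := by rw [hm22d]; ring
  have hrow3 : m31 + m32 = S3 := by rw [hm32d]; ring
  have hcol1 : m11 + m21 + m31 = D1 := by rw [hm21d, hm31d]; ring
  have hcol2 : m12 + m22 + m32 = D2 := by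
    have := htot
    have h1 := hrow1; have h2 := hrow2; have h3 := hrow3; have h4 := hcol1
    linarith
  -- division helpers
  have hdiv4 : ∀ c : ℝ, (n4 = 0 → c = 0) → n4 * (c / n4) = c := by
    intro c hc
    rcases eq_or_ne n4 0 with h | h
    · simp [h, hc h]
    · field_simp
  have hdivk : ∀ c : ℝ, (k = 0 → c = 0) → k * (c / k) = c := by
    intro c hc
    rcases eq_or_ne k 0 with h | h
    · simp [h, hc h]
    · field_simp
  have hdiv3 : ∀ c : ℝ, (n3 = 0 → c = 0) → n3 * (c / n3) = c := by
    intro c hc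
    rcases eq_or_ne n3 0 with h | h
    · simp [h, hc h]
    · field_simp
  -- distance facts
  have hdistadj : ∀ u v : Fin N, G.Adj u v → (G.dist u v : ℝ) ≤ 1 := by
    intro u v h
    rw [SimpleGraph.dist_eq_one_iff_adj.mpr h]; norm_num
  have hdtri : ∀ u v w : Fin N, G.dist u w ≤ G.dist u v + G.dist v w :=
    fun u v w => hconn.dist_triangle
  have hdyx : (G.dist y x : ℝ) ≤ 1 := hdistadj _ _ hxy.symm
  have hdyBy : ∀ v ∈ By, (G.dist y v : ℝ) ≤ 1 := fun v hv => hdistadj _ _ ((memBy v).mp hv).1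
  have hdAx : ∀ u ∈ A, (G.dist u x : ℝ) ≤ 1 := fun u hu => hdistadj _ _ ((memA u).mp hu).1.symm
  have hdBxx : ∀ u ∈ Bx, (G.dist u x : ℝ) ≤ 1 := fun u hu => hdistadj _ _ ((memBx u).mp hu).1.symm
  have hdistA : ∀ u ∈ A, ∀ v ∈ By, (G.dist u v : ℝ) ≤ 2 := by
    intro u hu v hv
    have h1 : G.dist u y = 1 := SimpleGraph.dist_eq_one_iff_adj.mpr ((memA u).mp hu).2.symm
    have h2 : G.dist y v = 1 := SimpleGraph.dist_eq_one_iff_adj.mpr ((memBy v).mp hv).1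
    have h3 := hdtri u y v
    rw [h1, h2] at h3
    exact_mod_cast h3
  have hdistB : ∀ u ∈ Bx, ∀ v ∈ By, (G.dist u v : ℝ) ≤ 3 := by
    intro u hu v hv
    have h1 : G.dist u x = 1 := SimpleGraph.dist_eq_one_iff_adj.mpr ((memBx u).mp hu).1.symm
    have h2 : G.dist x y = 1 := SimpleGraph.dist_eq_one_iff_adj.mpr hxy
    have h3 : G.dist y v = 1 := SimpleGraph.dist_eq_one_iff_adj.mpr ((memBy v).mp hv).1
    have t1 := hdtri u x v
    have t2 := hdtri x y v
    rw [h1] at t1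
    rw [h2, h3] at t2
    have : G.dist u v ≤ 3 := by omega
    exact_mod_cast this
  -- summation helpers
  have hsumv : ∀ a b : ℝ,
      (∑ v : Fin N, if v = x then a else if v ∈ By then b else 0) = a + n4 * b := by
    intro a b
    have hpt : ∀ v : Fin N, (if v = x then a else if v ∈ By then b else 0)
        = (if v = x then a else 0) + (if v ∈ By then b else 0) := by
      intro v
      by_cases h1 : v = x
      · subst h1; simp [hxBy]
      · simp [h1]
    rw [Finset.sum_congr rfl fun v _ => hpt v, Finset.sum_add_distrib, sum_pt, sum_mem_const,
      ← hn4]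
  have hsumu : ∀ g1 g2 g3 : ℝ,
      (∑ u : Fin N, if u = y then g1 else if u ∈ A then g2 else if u ∈ Bx then g3 else 0)
      = g1 + k * g2 + n3 * g3 := by
    intro g1 g2 g3
    have hpt : ∀ u : Fin N,
        (if u = y then g1 else if u ∈ A then g2 else if u ∈ Bx then g3 else 0)
        = (if u = y then g1 else 0) + (if u ∈ A then g2 else 0) + (if u ∈ Bx then g3 else 0) := by
      intro u
      by_cases h1 : u = y
      · subst h1; simp [hyA, hyBx]
      · by_cases h2 : u ∈ A
        · simp [h1, h2, hABx u h2]
        · simp [h1, h2]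
    rw [Finset.sum_congr rfl fun u _ => hpt u, Finset.sum_add_distrib, Finset.sum_add_distrib,
      sum_pt, sum_mem_const, sum_mem_const, ← hk, ← hn3]
  have hdiagrow : ∀ u : Fin N,
      (∑ v : Fin N, if u = v ∧ u ∈ A then D2 else 0) = (if u ∈ A then D2 else 0) := by
    intro u
    by_cases h : u ∈ A
    · rw [if_pos h]
      have hpt : ∀ v : Fin N, (if u = v ∧ u ∈ A then D2 else 0) = (if u = v then D2 else 0) := by
        intro v
        by_cases h2 : u = v
        · subst h2; simp [h]
        · simp [h2]
      rw [Finset.sum_congr rfl fun v _ => hpt v]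
      have hpt2 : ∀ v : Fin N, (if u = v then D2 else 0) = (if v = u then D2 else 0) := by
        intro v; by_cases h2 : u = v
        · simp [h2]
        · simp [h2, Ne.symm h2]
      rw [Finset.sum_congr rfl fun v _ => hpt2 v, sum_pt]
    · rw [if_neg h]
      apply Finset.sum_eq_zero
      intro v _
      simp [h]
  have hdiagcol : ∀ v : Fin N,
      (∑ u : Fin N, if u = v ∧ u ∈ A then D2 else 0) = (if v ∈ A then D2 else 0) := by
    intro v
    by_cases h : v ∈ A
    · rw [if_pos h]
      have hpt : ∀ u : Fin N, (if u = v ∧ u ∈ A then D2 else 0) = (if u = v then D2 else 0) := by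
        intro u; by_cases h2 : u = v
        · subst h2; simp [h]
        · simp [h2]
      rw [Finset.sum_congr rfl fun u _ => hpt u, sum_pt]
    · rw [if_neg h]
      apply Finset.sum_eq_zero
      intro u _
      by_cases h2 : u = v
      · subst h2; simp [h]
      · simp [h2]
  -- the coupling
  refine ⟨fun u v =>
      (if u = v ∧ u ∈ A then D2 else 0) +
      (if u = y then (if v = x then m12 else if v ∈ By then m11/n4 else 0)
       else if u ∈ A then (if v = x then m22/k else if v ∈ By then m21/(k*n4) else 0)
       else if u ∈ Bx then (if v = x then m32/n3 else if v ∈ By then m31/(n3*n4) else 0)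
       else 0), ?_, ?_, ?_, ?_⟩
  · -- nonnegativity
    intro u v
    dsimp only
    refine add_nonneg ?_ ?_
    · split_ifs <;> first | exact hD2 | exact le_rfl
    · split_ifs <;>
        first
          | exact le_rfl
          | exact hm12
          | exact div_nonneg hm11 hn40
          | exact div_nonneg hm22 hk0
          | exact div_nonneg hm21 (mul_nonneg hk0 hn40)
          | exact div_nonneg hm32 hn30
          | exact div_nonneg hm31 (mul_nonneg hn30 hn40)
  · -- row marginals
    intro u
    dsimp only
    rw [Finset.sum_add_distrib, hdiagrow u]
    by_cases hu1 : u = y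
    · simp only [hu1, eq_self_iff_true, if_true]
      rw [if_neg hyA, zero_add]
      rw [hsumv, hdiv4 m11 (fun h => (hn4z h).1)]
      simp [unifMeasure, hxy, ← hdx]
      linarith [hrow1, hS1d, one_div dx]
    · by_cases hu2 : u ∈ A
      · rw [if_pos hu2]
        simp only [if_neg hu1, if_pos hu2]
        rw [hsumv]
        have hkne : k ≠ 0 := by
          rw [hk]
          exact_mod_cast (Finset.card_pos.mpr ⟨u, hu2⟩).ne'
        have e1 : n4 * (m21/(k*n4)) = m21/k := by
          rw [show m21/(k*n4) = (m21/k)/n4 from by ring]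
          exact hdiv4 _ (fun h => by rw [(hn4z h).2.1, zero_div])
        rw [e1]
        have e2 : m22/k + m21/k = 1/dx - D2 := by
          rw [← add_div, show m22 + m21 = S2 from by linarith [hrow2], hS2d,
            mul_div_cancel_left₀ _ hkne]
        have hadj : G.Adj x u := ((memA u).mp hu2).1
        simp [unifMeasure, hadj, ← hdx]
        linarith [e2, one_div dx]
      · by_cases hu3 : u ∈ Bx
        · rw [if_neg hu2, zero_add]
          simp only [if_neg hu1, if_neg hu2, if_pos hu3]
          rw [hsumv]
          have hn3ne : n3 ≠ 0 := by
            rw [hn3]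
            exact_mod_cast (Finset.card_pos.mpr ⟨u, hu3⟩).ne'
          have e1 : n4 * (m31/(n3*n4)) = m31/n3 := by
            rw [show m31/(n3*n4) = (m31/n3)/n4 from by ring]
            exact hdiv4 _ (fun h => by rw [(hn4z h).2.2, zero_div])
          rw [e1]
          have e2 : m32/n3 + m31/n3 = 1/dx := by
            rw [← add_div, show m32 + m31 = S3 from by linarith [hrow3], hS3d,
              div_div, mul_comm, ← div_div, div_self hn3ne]
          have hadj : G.Adj x u := ((memBx u).mp hu3).1
          simp [unifMeasure, hadj, ← hdx]
          linarith [e2, one_div dx]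
        · rw [if_neg hu2, zero_add]
          simp only [if_neg hu1, if_neg hu2, if_neg hu3]
          have hnadj : ¬ G.Adj x u := fun h => hu3 ((memBx u).mpr ⟨h, not_or.mpr ⟨hu1, hu2⟩⟩)
          simp [unifMeasure, hnadj]
  · -- column marginals
    intro v
    dsimp only
    rw [Finset.sum_add_distrib, hdiagcol v, hsumu]
    by_cases hv1 : v = x
    · simp only [hv1, eq_self_iff_true, if_true]
      rw [if_neg hxA, zero_add]
      rw [hdivk m22 (fun h => (hkz h).2), hdiv3 m32 (fun h => (hn3z h).2)]
      simp [unifMeasure, hxy.symm, ← hdy]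
      linarith [hcol2, hD2d, one_div dy]
    · by_cases hv2 : v ∈ By
      · have hvA : v ∉ A := fun h => hABy v h hv2
        rw [if_neg hvA, zero_add]
        simp only [if_neg hv1, if_pos hv2]
        have hn4ne : n4 ≠ 0 := by
          rw [hn4]
          exact_mod_cast (Finset.card_pos.mpr ⟨v, hv2⟩).ne'
        have e1 : k * (m21/(k*n4)) = m21/n4 := by
          rw [show m21/(k*n4) = (m21/n4)/k from by ring]
          exact hdivk _ (fun h => by rw [(hkz h).1, zero_div])
        have e2 : n3 * (m31/(n3*n4)) = m31/n4 := by
          rw [show m31/(n3*n4) = (m31/n4)/n3 from by ring]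
          exact hdiv3 _ (fun h => by rw [(hn3z h).1, zero_div])
        rw [e1, e2]
        have e3 : m11/n4 + m21/n4 + m31/n4 = D2 := by
          rw [← add_div, ← add_div, show m11 + m21 + m31 = D1 from hcol1, hD1d,
            div_div, mul_comm, ← div_div, div_self hn4ne, hD2d]
        have hadj : G.Adj y v := ((memBy v).mp hv2).1
        simp [unifMeasure, hadj, ← hdy]
        linarith [e3, hD2d, one_div dy]
      · by_cases hv3 : v ∈ A
        · rw [if_pos hv3]
          simp only [if_neg hv1, if_neg hv2]
          have hadj : G.Adj y v := ((memA v).mp hv3).2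
          simp [unifMeasure, hadj, ← hdy]
          linarith [hD2d, one_div dy]
        · rw [if_neg hv3]
          simp only [if_neg hv1, if_neg hv2]
          have hnadj : ¬ G.Adj y v := fun h => hv2 ((memBy v).mpr ⟨h, not_or.mpr ⟨hv1, hv3⟩⟩)
          simp [unifMeasure, hnadj]
  · -- cost bound
    dsimp only
    simp only [mul_add, Finset.sum_add_distrib]
    have hdzero : (∑ u : Fin N, ∑ v : Fin N,
        (G.dist u v : ℝ) * (if u = v ∧ u ∈ A then D2 else 0)) = 0 := by
      apply Finset.sum_eq_zero; intro u _
      apply Finset.sum_eq_zero; intro v _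
      by_cases h : u = v ∧ u ∈ A
      · rw [if_pos h]
        have : G.dist u v = 0 := by rw [h.1, SimpleGraph.dist_self]
        rw [this]
        simp
      · rw [if_neg h, mul_zero]
    rw [hdzero, zero_add]
    have hbnd : ∀ u : Fin N, (∑ v : Fin N, (G.dist u v : ℝ) *
        (if u = y then (if v = x then m12 else if v ∈ By then m11/n4 else 0)
         else if u ∈ A then (if v = x then m22/k else if v ∈ By then m21/(k*n4) else 0)
         else if u ∈ Bx then (if v = x then m32/n3 else if v ∈ By then m31/(n3*n4) else 0)
         else 0)) ≤
        (if u = y then m12 + n4 * (m11/n4)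
         else if u ∈ A then m22/k + n4 * (2 * (m21/(k*n4)))
         else if u ∈ Bx then m32/n3 + n4 * (3 * (m31/(n3*n4)))
         else 0) := by
      intro u
      by_cases hu1 : u = y
      · simp only [hu1, eq_self_iff_true, if_true]
        rw [show m12 + n4 * (m11/n4)
            = ∑ v : Fin N, (if v = x then m12 else if v ∈ By then m11/n4 else 0) from
          (hsumv _ _).symm]
        apply Finset.sum_le_sum
        intro v _
        by_cases h1 : v = x
        · simp only [h1, eq_self_iff_true, if_true]
          calc (G.dist y x : ℝ) * m12 ≤ 1 * m12 := mul_le_mul_of_nonneg_right hdyx hm12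
            _ = m12 := one_mul _
        · by_cases h2 : v ∈ By
          · simp only [if_neg h1, if_pos h2]
            calc (G.dist y v : ℝ) * (m11/n4) ≤ 1 * (m11/n4) :=
                mul_le_mul_of_nonneg_right (hdyBy v h2) (div_nonneg hm11 hn40)
              _ = m11/n4 := one_mul _
          · simp only [if_neg h1, if_neg h2, mul_zero, le_refl]
      · by_cases hu2 : u ∈ A
        · simp only [if_neg hu1, if_pos hu2]
          rw [show m22/k + n4 * (2 * (m21/(k*n4)))
              = ∑ v : Fin N, (if v = x then m22/k else if v ∈ By then 2 * (m21/(k*n4)) else 0) from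
            (hsumv _ _).symm]
          apply Finset.sum_le_sum
          intro v _
          by_cases h1 : v = x
          · simp only [h1, eq_self_iff_true, if_true]
            calc (G.dist u x : ℝ) * (m22/k) ≤ 1 * (m22/k) :=
                mul_le_mul_of_nonneg_right (hdAx u hu2) (div_nonneg hm22 hk0)
              _ = m22/k := one_mul _
          · by_cases h2 : v ∈ By
            · simp only [if_neg h1, if_pos h2]
              exact mul_le_mul_of_nonneg_right (hdistA u hu2 v h2)
                (div_nonneg hm21 (mul_nonneg hk0 hn40))
            · simp only [if_neg h1, if_neg h2, mul_zero, le_refl]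
        · by_cases hu3 : u ∈ Bx
          · simp only [if_neg hu1, if_neg hu2, if_pos hu3]
            rw [show m32/n3 + n4 * (3 * (m31/(n3*n4)))
                = ∑ v : Fin N, (if v = x then m32/n3 else if v ∈ By then 3 * (m31/(n3*n4)) else 0) from
              (hsumv _ _).symm]
            apply Finset.sum_le_sum
            intro v _
            by_cases h1 : v = x
            · simp only [h1, eq_self_iff_true, if_true]
              calc (G.dist u x : ℝ) * (m32/n3) ≤ 1 * (m32/n3) :=
                  mul_le_mul_of_nonneg_right (hdBxx u hu3) (div_nonneg hm32 hn30)
                _ = m32/n3 := one_mul _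
            · by_cases h2 : v ∈ By
              · simp only [if_neg h1, if_pos h2]
                exact mul_le_mul_of_nonneg_right (hdistB u hu3 v h2)
                  (div_nonneg hm31 (mul_nonneg hn30 hn40))
              · simp only [if_neg h1, if_neg h2, mul_zero, le_refl]
          · simp only [if_neg hu1, if_neg hu2, if_neg hu3, mul_zero]
            rw [Finset.sum_const_zero]
    refine le_trans (Finset.sum_le_sum fun u _ => hbnd u) ?_
    rw [hsumu]
    have e1 : n4 * (m11/n4) = m11 := hdiv4 m11 (fun h => (hn4z h).1)
    have e2 : n4 * (2 * (m21/(k*n4))) = 2 * (m21/k) := by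
      rw [show (2 : ℝ) * (m21/(k*n4)) = (2 * (m21/k))/n4 from by ring]
      exact hdiv4 _ (fun h => by rw [(hn4z h).2.1]; simp)
    have e3 : n4 * (3 * (m31/(n3*n4))) = 3 * (m31/n3) := by
      rw [show (3 : ℝ) * (m31/(n3*n4)) = (3 * (m31/n3))/n4 from by ring]
      exact hdiv4 _ (fun h => by rw [(hn4z h).2.2]; simp)
    rw [e1, e2, e3]
    have e4 : k * (m22/k + 2 * (m21/k)) = m22 + 2 * m21 := by
      rw [show m22/k + 2 * (m21/k) = (m22 + 2 * m21)/k from by ring]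
      exact hdivk _ (fun h => by rw [(hkz h).1, (hkz h).2]; ring)
    have e5 : n3 * (m32/n3 + 3 * (m31/n3)) = m32 + 3 * m31 := by
      rw [show m32/n3 + 3 * (m31/n3) = (m32 + 3 * m31)/n3 from by ring]
      exact hdiv3 _ (fun h => by rw [(hn3z h).1, (hn3z h).2]; ring)
    rw [e4, e5]
    -- final arithmetic
    have hD1v : D1 = 1 - D2 - k/dy := by
      rw [hD1d, hD2d]
      field_simp
      linarith
    have hx1 : m21 + m31 = max (1 - S1 - D2 - k/dy) 0 := by
      have h1 : m21 + m31 = D1 - m11 := by linarith [hcol1]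
      rcases le_total S1 D1 with h | h
      · rw [h1, hm11d, min_eq_left h, max_eq_left (by linarith [hD1v])]
        linarith [hD1v]
      · rw [h1, hm11d, min_eq_right h, max_eq_right (by linarith [hD1v])]
        ring
    have hx2 : m31 = max (1 - S1 - D2 - k/dx) 0 := by
      have e : D1 - (S1 + S2) = 1 - S1 - D2 - k/dx := by
        rw [hD1v, hS2d, hD2d]
        field_simp
        ring
      rcases le_total (S1 + S2) D1 with h | h
      · rw [hm31d, min_eq_left h, max_eq_left (by linarith)]
        linarith
      · rw [hm31d, min_eq_right h, max_eq_right (by linarith)]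
        ring
    have hfin : (m12 + m11) + (m22 + 2 * m21) + (m32 + 3 * m31)
        = (1 - k/dy) + max (1 - S1 - D2 - k/dx) 0 + max (1 - S1 - D2 - k/dy) 0 := by
      have := htotS
      linarith [hrow1, hrow2, hrow3, hx1, hx2]
    linarith [hfin]


/-- Theorem 3 (Jost–Liu): on a finite simple undirected connected graph, Ollivier's
Ricci curvature `κ(i,j) = 1 − W₁(m_i, m_j)` of every edge `(i,j)` is bounded below by
`JLC(i,j) = −(1 − 1/dᵢ − 1/dⱼ − #(i,j)/min(dᵢ,dⱼ))₊
           − (1 − 1/dᵢ − 1/dⱼ − #(i,j)/max(dᵢ,dⱼ))₊ + #(i,j)/max(dᵢ,dⱼ)`,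
where `#(i,j)` is the number of triangles containing the edge `(i,j)`. -/
theorem stmt_6
    {N : ℕ}
    (G : SimpleGraph (Fin N)) [DecidableRel G.Adj]
    (hconn : G.Connected)
    -- degrees
    (d : Fin N → ℝ)
    (hd : ∀ i, d i = (G.degree i : ℝ))
    (hdpos : ∀ i, 0 < d i)
    -- number of triangles containing each edge: #(i,j) = |N(i) ∩ N(j)|
    (tri : Fin N → Fin N → ℝ)
    (htri : ∀ i j, tri i j = ((G.neighborFinset i ∩ G.neighborFinset j).card : ℝ)) :
    ∀ i j, G.Adj i j →
      -(max (1 - 1 / d i - 1 / d j - tri i j / min (d i) (d j)) 0)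
        - max (1 - 1 / d i - 1 / d j - tri i j / max (d i) (d j)) 0
        + tri i j / max (d i) (d j)
      ≤ 1 - W1dist G (unifMeasure G i) (unifMeasure G j) := by
  intro i j hij
  rw [hd i, hd j, htri i j]
  rcases le_total (G.degree i) (G.degree j) with hc | hc
  · have hcR : ((G.degree i : ℝ)) ≤ (G.degree j : ℝ) := by exact_mod_cast hc
    rw [min_eq_left hcR, max_eq_right hcR]
    obtain ⟨ξ, h0, h1, h2, hcost⟩ := jl_coupling G hconn i j hij hc
    have hW := W1dist_le G _ _ ξ h0 h1 h2 hcost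
    linarith
  · have hcR : ((G.degree j : ℝ)) ≤ (G.degree i : ℝ) := by exact_mod_cast hc
    rw [min_eq_right hcR, max_eq_left hcR]
    obtain ⟨ξ, h0, h1, h2, hcost⟩ := jl_coupling G hconn j i hij.symm hc
    have hcost' : ∑ u, ∑ v, (G.dist u v : ℝ) * ξ v u
        = ∑ u, ∑ v, (G.dist u v : ℝ) * ξ u v := by
      rw [Finset.sum_comm]
      exact Finset.sum_congr rfl fun u _ => Finset.sum_congr rfl fun v _ => by
        rw [SimpleGraph.dist_comm]
    have hW := W1dist_le G (unifMeasure G i) (unifMeasure G j) (fun u v => ξ v u)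
      (fun u v => h0 v u) (fun u => h2 u) (fun v => h1 v)
      (le_trans (le_of_eq hcost') hcost)
    have hinter : G.neighborFinset j ∩ G.neighborFinset i
        = G.neighborFinset i ∩ G.neighborFinset j := Finset.inter_comm _ _
    rw [hinter] at hW
    have e1 : max (1 - 1/(G.degree j:ℝ) - 1/(G.degree i:ℝ)
        - ((G.neighborFinset i ∩ G.neighborFinset j).card : ℝ)/(G.degree j:ℝ)) 0
        = max (1 - 1/(G.degree i:ℝ) - 1/(G.degree j:ℝ)
        - ((G.neighborFinset i ∩ G.neighborFinset j).card : ℝ)/(G.degree j:ℝ)) 0 := by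
      rw [show (1 - 1/(G.degree j:ℝ) - 1/(G.degree i:ℝ)
        - ((G.neighborFinset i ∩ G.neighborFinset j).card : ℝ)/(G.degree j:ℝ))
        = (1 - 1/(G.degree i:ℝ) - 1/(G.degree j:ℝ)
        - ((G.neighborFinset i ∩ G.neighborFinset j).card : ℝ)/(G.degree j:ℝ)) from by ring]
    have e2 : max (1 - 1/(G.degree j:ℝ) - 1/(G.degree i:ℝ)
        - ((G.neighborFinset i ∩ G.neighborFinset j).card : ℝ)/(G.degree i:ℝ)) 0
        = max (1 - 1/(G.degree i:ℝ) - 1/(G.degree j:ℝ)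
        - ((G.neighborFinset i ∩ G.neighborFinset j).card : ℝ)/(G.degree i:ℝ)) 0 := by
      rw [show (1 - 1/(G.degree j:ℝ) - 1/(G.degree i:ℝ)
        - ((G.neighborFinset i ∩ G.neighborFinset j).card : ℝ)/(G.degree i:ℝ))
        = (1 - 1/(G.degree i:ℝ) - 1/(G.degree j:ℝ)
        - ((G.neighborFinset i ∩ G.neighborFinset j).card : ℝ)/(G.degree i:ℝ)) from by ring]
    rw [e1, e2] at hW
    linarith
end
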